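/- arXiv:1702.06791 — 5 statements merged into one kernel-verified Lean document; each statement's English description precedes it below -/
import Mathlib

section
/- With S, T finite sets, P a nonempty set of probability mass functions on S × T, g : S → ℝ nonnegative, f : T → ℝ, the function G(μ) = inf_{p ∈ P} E_p[g(s)(f(t) − μ)] has a root: there exists μ ∈ ℝ with G(μ) = 0. Moreover, G(μ) ≥ 0 for all μ < min f and G(μ) ≤ 0 for all μ > max f. -/
/-- A probability mass function on a finite type. -/
def IsPMF {α : Type*} [Fintype α] (p : α → ℝ) : Prop :=
  (∀ x, 0 ≤ p x) ∧ ∑ x, p x = 1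

/-- The function `G(μ) = inf_{p ∈ P} E_p[g(s)(f(t) − μ)]`. -/
noncomputable def GBR {S T : Type*} [Fintype S] [Fintype T]
    (P : Set (S × T → ℝ)) (g : S → ℝ) (f : T → ℝ) (μ : ℝ) : ℝ :=
  sInf ((fun p => ∑ x : S × T, p x * (g x.1 * (f x.2 - μ))) '' P)

/-- `G` has a root; moreover `G(μ) ≥ 0` for `μ < min f` and `G(μ) ≤ 0` for `μ > max f`. -/
theorem GBR_has_root {S T : Type*} [Fintype S] [Fintype T] [Nonempty T]
    (P : Set (S × T → ℝ)) (hPne : P.Nonempty) (hP : ∀ p ∈ P, IsPMF p)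
    (g : S → ℝ) (hg : ∀ s, 0 ≤ g s) (f : T → ℝ) :
    (∃ μ : ℝ, GBR P g f μ = 0) ∧
    (∀ μ : ℝ, μ < Finset.univ.inf' Finset.univ_nonempty f → 0 ≤ GBR P g f μ) ∧
    (∀ μ : ℝ, Finset.univ.sup' Finset.univ_nonempty f < μ → GBR P g f μ ≤ 0) := by
  classical
  set E : (S × T → ℝ) → ℝ → ℝ :=
    fun p μ => ∑ x : S × T, p x * (g x.1 * (f x.2 - μ)) with hE
  have hGBR : ∀ μ, GBR P g f μ = sInf ((fun p => E p μ) '' P) := fun μ => rfl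
  set m : ℝ := Finset.univ.inf' Finset.univ_nonempty f with hm
  set Mf : ℝ := Finset.univ.sup' Finset.univ_nonempty f with hMf
  obtain ⟨p0, hp0⟩ := hPne
  -- S is nonempty
  have hST : Nonempty (S × T) := by
    by_contra h
    have : (∑ x : S × T, p0 x) = 0 := by
      rw [Finset.sum_eq_zero]
      intro x _
      exact absurd ⟨x⟩ h
    rw [(hP p0 hp0).2] at this
    norm_num at this
  have hS : Nonempty S := ⟨hST.some.1⟩
  set M : ℝ := Finset.univ.sup' (Finset.univ_nonempty) g with hMdef
  have hgM : ∀ s, g s ≤ M := fun s => Finset.le_sup' g (Finset.mem_univ s)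
  have hM0 : 0 ≤ M := le_trans (hg hS.some) (hgM hS.some)
  have hmf : ∀ t, m ≤ f t := fun t => Finset.inf'_le f (Finset.mem_univ t)
  have hfM : ∀ t, f t ≤ Mf := fun t => Finset.le_sup' f (Finset.mem_univ t)
  -- slope bounds
  have hB0 : ∀ p ∈ P, 0 ≤ ∑ x : S × T, p x * g x.1 := by
    intro p hp
    exact Finset.sum_nonneg fun x _ => mul_nonneg ((hP p hp).1 x) (hg x.1)
  have hBM : ∀ p ∈ P, (∑ x : S × T, p x * g x.1) ≤ M := by
    intro p hp
    calc (∑ x : S × T, p x * g x.1) ≤ ∑ x : S × T, p x * M :=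
          Finset.sum_le_sum fun x _ =>
            mul_le_mul_of_nonneg_left (hgM x.1) ((hP p hp).1 x)
      _ = M := by rw [← Finset.sum_mul, (hP p hp).2, one_mul]
  -- affine structure
  have key : ∀ p : S × T → ℝ, ∀ μ ν : ℝ,
      E p μ = E p ν + (ν - μ) * ∑ x : S × T, p x * g x.1 := by
    intro p μ ν
    simp only [hE]
    rw [Finset.mul_sum, ← Finset.sum_add_distrib]
    exact Finset.sum_congr rfl fun x _ => by ring
  -- sign lemmas
  have hEm : ∀ p ∈ P, ∀ μ ≤ m, 0 ≤ E p μ := by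
    intro p hp μ hμ
    exact Finset.sum_nonneg fun x _ =>
      mul_nonneg ((hP p hp).1 x)
        (mul_nonneg (hg x.1) (by linarith [hmf x.2]))
  have hEM : ∀ p ∈ P, ∀ μ, Mf ≤ μ → E p μ ≤ 0 := by
    intro p hp μ hμ
    exact Finset.sum_nonpos fun x _ =>
      mul_nonpos_of_nonneg_of_nonpos ((hP p hp).1 x)
        (mul_nonpos_of_nonneg_of_nonpos (hg x.1) (by linarith [hfM x.2]))
  -- uniform lower bound, bddBelow
  have hlow : ∀ μ, ∀ p ∈ P, -(M * |μ - m|) ≤ E p μ := by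
    intro μ p hp
    have h1 := hEm p hp m le_rfl
    have h2 := hB0 p hp
    have h3 := hBM p hp
    rw [key p μ m]
    rcases abs_cases (μ - m) with ⟨h, h'⟩ | ⟨h, h'⟩
    · rw [h]
      nlinarith
    · rw [h]
      nlinarith
  have hbdd : ∀ μ, BddBelow ((fun p => E p μ) '' P) := by
    intro μ
    refine ⟨-(M * |μ - m|), ?_⟩
    rintro y ⟨p, hp, rfl⟩
    exact hlow μ p hp
  have hne : ∀ μ, ((fun p => E p μ) '' P).Nonempty := fun μ => ⟨E p0 μ, p0, hp0, rfl⟩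
  -- G nonneg / nonpos
  have hGnn : ∀ μ ≤ m, 0 ≤ GBR P g f μ := by
    intro μ hμ
    rw [hGBR]
    apply le_csInf (hne μ)
    rintro y ⟨p, hp, rfl⟩
    exact hEm p hp μ hμ
  have hGnp : ∀ μ, Mf ≤ μ → GBR P g f μ ≤ 0 := by
    intro μ hμ
    rw [hGBR]
    exact le_trans (csInf_le (hbdd μ) ⟨p0, hp0, rfl⟩) (hEM p0 hp0 μ hμ)
  -- Lipschitz
  have hlip : ∀ μ ν : ℝ, GBR P g f μ ≤ GBR P g f ν + M * |μ - ν| := by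
    intro μ ν
    rw [hGBR μ, hGBR ν, ← sub_le_iff_le_add]
    apply le_csInf (hne ν)
    rintro y ⟨p, hp, rfl⟩
    rw [sub_le_iff_le_add]
    have h1 : E p μ ≤ E p ν + M * |μ - ν| := by
      rw [key p μ ν]
      have h2 := hB0 p hp
      have h3 := hBM p hp
      have h4 : ν - μ ≤ |μ - ν| := by
        rw [abs_sub_comm]; exact le_abs_self _
      nlinarith [abs_nonneg (μ - ν)]
    calc GBR P g f μ ≤ E p μ := by
          rw [hGBR]; exact csInf_le (hbdd μ) ⟨p, hp, rfl⟩
      _ ≤ E p ν + M * |μ - ν| := h1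
  have habs : ∀ μ ν : ℝ, |GBR P g f μ - GBR P g f ν| ≤ M * |μ - ν| := by
    intro μ ν
    rw [abs_sub_le_iff]
    constructor
    · linarith [hlip μ ν]
    · rw [abs_sub_comm]; linarith [hlip ν μ]
  have hcont : Continuous (GBR P g f) := by
    apply LipschitzWith.continuous (K := Real.toNNReal M)
    intro μ ν
    rw [edist_dist, edist_dist, Real.dist_eq, Real.dist_eq]
    rw [← ENNReal.ofReal_coe_nnreal, ← ENNReal.ofReal_mul (by positivity)]
    apply ENNReal.ofReal_le_ofReal
    rw [Real.coe_toNNReal _ hM0]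
    exact habs μ ν
  have hmM : m ≤ Mf := le_trans (hmf (Classical.arbitrary T)) (hfM (Classical.arbitrary T))
  refine ⟨?_, fun μ hμ => hGnn μ hμ.le, fun μ hμ => hGnp μ hμ.le⟩
  have hivt := intermediate_value_Icc' hmM (hcont.continuousOn)
  have h0mem : (0 : ℝ) ∈ Set.Icc (GBR P g f Mf) (GBR P g f m) :=
    ⟨hGnp Mf le_rfl, hGnn m le_rfl⟩
  obtain ⟨μ, _, hμ⟩ := hivt h0mem
  exact ⟨μ, hμ⟩
end

section
/- With S, T finite sets, P a nonempty set of probability mass functions on S × T, g : S → ℝ nonnegative, f : T → ℝ, if the lower expectation of g is strictly positive, i.e. inf_{p ∈ P} E_p[g(s)] > 0, then G(μ) = inf_{p ∈ P} E_p[g(s)(f(t) − μ)] is strictly decreasing and has a unique root. -/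
/-- If the lower expectation of `g` is strictly positive, then `G` is strictly decreasing
and has a unique root. -/
theorem GBR_strictAnti_unique_root {S T : Type*} [Fintype S] [Fintype T]
    (P : Set (S × T → ℝ)) (hPne : P.Nonempty) (hP : ∀ p ∈ P, IsPMF p)
    (g : S → ℝ) (hg : ∀ s, 0 ≤ g s) (f : T → ℝ)
    (hpos : 0 < sInf ((fun p => ∑ x : S × T, p x * g x.1) '' P)) :
    StrictAnti (GBR P g f) ∧ ∃! μ : ℝ, GBR P g f μ = 0 := by
  classical
  obtain ⟨p₀, hp₀⟩ := hPne
  set A : (S × T → ℝ) → ℝ := fun p => ∑ x : S × T, p x * g x.1 with hAdef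
  set E : (S × T → ℝ) → ℝ → ℝ :=
    fun p μ => ∑ x : S × T, p x * (g x.1 * (f x.2 - μ)) with hEdef
  -- the underlying type is nonempty
  have hne : Nonempty (S × T) := by
    by_contra h
    have hemp : IsEmpty (S × T) := not_nonempty_iff.mp h
    have := (hP p₀ hp₀).2
    simp [Finset.univ_eq_empty] at this
  -- lower bound for expectations
  have hsum_ge : ∀ p ∈ P, ∀ (v : S × T → ℝ) (m : ℝ), (∀ x, m ≤ v x) →
      m ≤ ∑ x : S × T, p x * v x := by
    intro p hp v m hv
    have h1 : ∑ x : S × T, p x * m ≤ ∑ x : S × T, p x * v x :=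
      Finset.sum_le_sum fun x _ => mul_le_mul_of_nonneg_left (hv x) ((hP p hp).1 x)
    have h2 : ∑ x : S × T, p x * m = m := by
      rw [← Finset.sum_mul, (hP p hp).2, one_mul]
    linarith
  have hsum_le : ∀ p ∈ P, ∀ (v : S × T → ℝ) (M : ℝ), (∀ x, v x ≤ M) →
      (∑ x : S × T, p x * v x) ≤ M := by
    intro p hp v M hv
    have h1 : ∑ x : S × T, p x * v x ≤ ∑ x : S × T, p x * M :=
      Finset.sum_le_sum fun x _ => mul_le_mul_of_nonneg_left (hv x) ((hP p hp).1 x)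
    have h2 : ∑ x : S × T, p x * M = M := by
      rw [← Finset.sum_mul, (hP p hp).2, one_mul]
    linarith
  -- affine decomposition
  have hE_lin : ∀ p μ, E p μ = E p 0 - μ * A p := by
    intro p μ
    simp only [hEdef, hAdef, Finset.mul_sum, ← Finset.sum_sub_distrib]
    congr 1; funext x; ring
  -- facts about A
  set c : ℝ := sInf ((fun p => ∑ x : S × T, p x * g x.1) '' P) with hcdef
  have hA_nonneg : ∀ p ∈ P, 0 ≤ A p := fun p hp =>
    hsum_ge p hp (fun x => g x.1) 0 (fun x => hg x.1)
  have hbddA : BddBelow ((fun p => ∑ x : S × T, p x * g x.1) '' P) := by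
    refine ⟨0, ?_⟩
    rintro b ⟨p, hp, rfl⟩
    exact hA_nonneg p hp
  have hcle : ∀ p ∈ P, c ≤ A p := fun p hp => csInf_le hbddA ⟨p, hp, rfl⟩
  obtain ⟨Mg, hMg⟩ : ∃ M : ℝ, ∀ x : S × T, g x.1 ≤ M := Finite.exists_le _
  have hMg0 : 0 ≤ Mg := le_trans (hg (Classical.arbitrary (S × T)).1)
    (hMg (Classical.arbitrary (S × T)))
  have hAle : ∀ p ∈ P, A p ≤ Mg := fun p hp => hsum_le p hp _ Mg hMg
  -- bounds for the GBR images
  have hbdd : ∀ μ : ℝ, BddBelow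
      ((fun p => ∑ x : S × T, p x * (g x.1 * (f x.2 - μ))) '' P) := by
    intro μ
    obtain ⟨M, hM⟩ : ∃ M : ℝ, ∀ x : S × T, -(g x.1 * (f x.2 - μ)) ≤ M :=
      Finite.exists_le _
    refine ⟨-M, ?_⟩
    rintro b ⟨p, hp, rfl⟩
    exact hsum_ge p hp _ (-M) fun x => by linarith [hM x]
  have hmem : ∀ μ : ℝ, ∀ p ∈ P,
      E p μ ∈ (fun p => ∑ x : S × T, p x * (g x.1 * (f x.2 - μ))) '' P :=
    fun μ p hp => ⟨p, hp, rfl⟩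
  have hGle : ∀ μ : ℝ, ∀ p ∈ P, GBR P g f μ ≤ E p μ :=
    fun μ p hp => csInf_le (hbdd μ) (hmem μ p hp)
  have hleG : ∀ (μ m : ℝ), (∀ p ∈ P, m ≤ E p μ) → m ≤ GBR P g f μ := by
    intro μ m h
    refine le_csInf ⟨E p₀ μ, hmem μ p₀ hp₀⟩ ?_
    rintro b ⟨p, hp, rfl⟩
    exact h p hp
  -- strict antitonicity
  have hanti : StrictAnti (GBR P g f) := by
    intro μ ν hlt
    have key : GBR P g f ν + (ν - μ) * c ≤ GBR P g f μ := by
      refine hleG μ _ ?_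
      intro p hp
      have h1 : GBR P g f ν ≤ E p ν := hGle ν p hp
      have h2 : E p ν = E p μ - (ν - μ) * A p := by
        rw [hE_lin p ν, hE_lin p μ]; ring
      have h3 : (ν - μ) * c ≤ (ν - μ) * A p :=
        mul_le_mul_of_nonneg_left (hcle p hp) (by linarith)
      linarith
    have : 0 < (ν - μ) * c := mul_pos (by linarith) hpos
    linarith
  refine ⟨hanti, ?_⟩
  -- Lipschitz continuity
  have hLip : ∀ μ ν : ℝ, GBR P g f μ ≤ GBR P g f ν + Mg * |ν - μ| := by
    intro μ ν
    have key : GBR P g f μ - Mg * |ν - μ| ≤ GBR P g f ν := by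
      refine hleG ν _ ?_
      intro p hp
      have h1 : GBR P g f μ ≤ E p μ := hGle μ p hp
      have h2 : E p μ = E p ν + (ν - μ) * A p := by
        rw [hE_lin p ν, hE_lin p μ]; ring
      have h3 : (ν - μ) * A p ≤ |ν - μ| * Mg := by
        calc (ν - μ) * A p ≤ |ν - μ| * A p :=
              mul_le_mul_of_nonneg_right (le_abs_self _) (hA_nonneg p hp)
          _ ≤ |ν - μ| * Mg :=
              mul_le_mul_of_nonneg_left (hAle p hp) (abs_nonneg _)
      nlinarith [abs_nonneg (ν - μ)]
    linarith
  have hcont : Continuous (GBR P g f) := by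
    have : LipschitzWith (Real.toNNReal Mg) (GBR P g f) := by
      refine LipschitzWith.of_dist_le_mul ?_
      intro μ ν
      rw [Real.dist_eq, Real.dist_eq, Real.coe_toNNReal Mg hMg0]
      rw [abs_sub_le_iff]
      constructor
      · have := hLip μ ν
        rw [abs_sub_comm] at this
        linarith
      · have := hLip ν μ
        linarith
    exact this.continuous
  -- find points where G is positive / negative
  obtain ⟨mB, hmB⟩ : ∃ m : ℝ, ∀ x : S × T, -(g x.1 * (f x.2 - 0)) ≤ m :=
    Finite.exists_le _
  set μ₁ : ℝ := -(|mB| + 1) / c with hμ₁def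
  set μ₂ : ℝ := (|E p₀ 0| + 1) / c with hμ₂def
  have hμ₁neg : μ₁ < 0 := by
    rw [hμ₁def]
    apply div_neg_of_neg_of_pos _ hpos
    have := abs_nonneg mB; linarith
  have hμ₂pos : 0 < μ₂ := by
    rw [hμ₂def]
    apply div_pos _ hpos
    have := abs_nonneg (E p₀ 0); linarith
  have hG₁pos : 0 < GBR P g f μ₁ := by
    have h : ∀ p ∈ P, -mB - μ₁ * c ≤ E p μ₁ := by
      intro p hp
      have h1 : -mB ≤ E p 0 := hsum_ge p hp _ (-mB) fun x => by
        have := hmB x; simp only [sub_zero] at this ⊢; linarith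
      have h2 : -μ₁ * c ≤ -μ₁ * A p :=
        mul_le_mul_of_nonneg_left (hcle p hp) (by linarith)
      rw [hE_lin p μ₁]; linarith
    have := hleG μ₁ _ h
    have hval : -mB - μ₁ * c = -mB + |mB| + 1 := by
      rw [hμ₁def]; field_simp; ring
    have habs : mB ≤ |mB| := le_abs_self mB
    linarith
  have hG₂neg : GBR P g f μ₂ < 0 := by
    have h1 : GBR P g f μ₂ ≤ E p₀ μ₂ := hGle μ₂ p₀ hp₀
    have h2 : E p₀ μ₂ = E p₀ 0 - μ₂ * A p₀ := hE_lin p₀ μ₂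
    have h3 : μ₂ * c ≤ μ₂ * A p₀ :=
      mul_le_mul_of_nonneg_left (hcle p₀ hp₀) (le_of_lt hμ₂pos)
    have hval : μ₂ * c = |E p₀ 0| + 1 := by
      rw [hμ₂def]; field_simp
    have habs : E p₀ 0 ≤ |E p₀ 0| := le_abs_self _
    linarith
  have hμlt : μ₁ < μ₂ := lt_trans hμ₁neg hμ₂pos
  -- intermediate value theorem
  have hiv : (0 : ℝ) ∈ GBR P g f '' Set.Icc μ₁ μ₂ := by
    apply intermediate_value_Icc' (le_of_lt hμlt) hcont.continuousOn
    exact ⟨le_of_lt hG₂neg, le_of_lt hG₁pos⟩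
  obtain ⟨μ, _, hμroot⟩ := hiv
  exact ⟨μ, hμroot, fun ν hν => hanti.injective (hν.trans hμroot.symm)⟩
end

section
/- With S, T finite sets, P a nonempty set of probability mass functions on S × T, g : S → ℝ nonnegative, f : T → ℝ, suppose inf_{p ∈ P} E_p[g] = 0 but sup_{p ∈ P} E_p[g] > 0. Then G(μ) = inf_{p ∈ P} E_p[g(s)(f(t) − μ)] has a maximum root μ*, G(μ) = 0 for every μ ≤ μ*, and G is strictly decreasing on (μ*, ∞). -/
/-!
Write `E_p[g(s)(f(t) - μ)] = a_p - μ b_p` with `b_p = E_p[g] ≥ 0` and `|a_p| ≤ ‖f‖ b_p`, so `G`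
is the lower envelope of a family of nonincreasing lines. A line with `b_p = 0` vanishes
identically and the others vanish at `a_p / b_p`, so `G ≥ 0` exactly up to
`μ* = inf a_p / b_p`, while `inf b_p = 0` forces `G ≤ 0` everywhere. Beyond `μ*` we get
`G < 0 = G(μ*)`, and concavity of `G`, an infimum of affine functions, makes this a strict
decrease.
-/

open Set Finset

lemma Real.nonempty_of_sSup_pos {s : Set ℝ} (hs : 0 < sSup s) : s.Nonempty :=
  nonempty_iff_ne_empty.2 fun h => by simp [h] at hs

lemma Real.bddAbove_of_sSup_pos {s : Set ℝ} (hs : 0 < sSup s) : BddAbove s := by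
  by_contra h
  simp [Real.sSup_of_not_bddAbove h] at hs

theorem ConcaveOn.strictAntiOn_Ioi {f : ℝ → ℝ} {x₀ : ℝ} (hf : ConcaveOn ℝ univ f)
    (hlt : ∀ x, x₀ < x → f x < f x₀) : StrictAntiOn f (Ioi x₀) := by
  intro a (ha : x₀ < a) b _ hab
  have hslope : (f b - f a) / (b - a) < 0 :=
    (hf.slope_anti_adjacent (mem_univ x₀) (mem_univ b) ha hab).trans_lt
      (div_neg_of_neg_of_pos (sub_neg.2 (hlt a ha)) (sub_pos.2 ha))
  linarith [(div_lt_iff₀ (sub_pos.2 hab)).1 hslope]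

lemma abs_sum_mul_le_mul_sum {ι : Type*} (s : Finset ι) {w h : ι → ℝ} {M : ℝ}
    (hw : ∀ i ∈ s, 0 ≤ w i) (hh : ∀ i ∈ s, |h i| ≤ M) :
    |∑ i ∈ s, w i * h i| ≤ M * ∑ i ∈ s, w i :=
  calc |∑ i ∈ s, w i * h i| ≤ ∑ i ∈ s, |w i * h i| := abs_sum_le_sum_abs _ _
    _ ≤ ∑ i ∈ s, w i * M := sum_le_sum fun i hi => by
        rw [abs_mul, abs_of_nonneg (hw i hi)]
        exact mul_le_mul_of_nonneg_left (hh i hi) (hw i hi)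
    _ = M * ∑ i ∈ s, w i := by rw [← sum_mul, mul_comm]

lemma abs_sub_mul_le_of_abs_le_mul {a b M : ℝ} (hb : 0 ≤ b) (hab : |a| ≤ M * b) (μ : ℝ) :
    |a - μ * b| ≤ (|M| + |μ|) * b :=
  calc |a - μ * b| ≤ |a| + |μ| * b := by
        simpa only [abs_mul, abs_of_nonneg hb] using abs_sub a (μ * b)
    _ ≤ |M| * b + |μ| * b := by
        gcongr
        exact hab.trans (mul_le_mul_of_nonneg_right (le_abs_self M) hb)
    _ = (|M| + |μ|) * b := by ring

section LowerEnvelope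

variable {α : Type*} {P : Set α} {A B : α → ℝ} {M μ : ℝ}

noncomputable def lowerEnvelope (P : Set α) (A B : α → ℝ) (μ : ℝ) : ℝ :=
  sInf ((fun p => A p - μ * B p) '' P)

/-- The infimum of the zeros `A p / B p` of the strictly decreasing lines `μ ↦ A p - μ * B p`. -/
noncomputable def infRatio (P : Set α) (A B : α → ℝ) : ℝ :=
  sInf ((fun p => A p / B p) '' {p ∈ P | 0 < B p})

lemma bddBelow_affine_image (hB : ∀ p ∈ P, 0 ≤ B p) (hAB : ∀ p ∈ P, |A p| ≤ M * B p)
    (hBbdd : BddAbove (B '' P)) (μ : ℝ) :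
    BddBelow ((fun p => A p - μ * B p) '' P) := by
  obtain ⟨K, hK⟩ := hBbdd
  refine ⟨-((|M| + |μ|) * K), forall_mem_image.2 fun p hp => ?_⟩
  calc -((|M| + |μ|) * K) ≤ -((|M| + |μ|) * B p) := by
        gcongr
        exact hK (mem_image_of_mem B hp)
    _ ≤ A p - μ * B p := neg_le_of_abs_le (abs_sub_mul_le_of_abs_le_mul (hB p hp) (hAB p hp) μ)

lemma lowerEnvelope_le (hbdd : BddBelow ((fun p => A p - μ * B p) '' P)) {p : α} (hp : p ∈ P) :
    lowerEnvelope P A B μ ≤ A p - μ * B p :=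
  csInf_le hbdd (mem_image_of_mem _ hp)

lemma lowerEnvelope_nonpos (hB : ∀ p ∈ P, 0 ≤ B p) (hAB : ∀ p ∈ P, |A p| ≤ M * B p)
    (hBbdd : BddAbove (B '' P)) (hPne : P.Nonempty) (hlow : sInf (B '' P) = 0) (μ : ℝ) :
    lowerEnvelope P A B μ ≤ 0 := by
  have hC : 0 < |M| + |μ| + 1 := by positivity
  have hle : lowerEnvelope P A B μ / (|M| + |μ| + 1) ≤ sInf (B '' P) :=
    le_csInf (hPne.image B) <| forall_mem_image.2 fun p hp => by
      rw [div_le_iff₀ hC]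
      calc lowerEnvelope P A B μ ≤ A p - μ * B p :=
            lowerEnvelope_le (bddBelow_affine_image hB hAB hBbdd μ) hp
        _ ≤ (|M| + |μ|) * B p := le_of_abs_le (abs_sub_mul_le_of_abs_le_mul (hB p hp) (hAB p hp) μ)
        _ ≤ B p * (|M| + |μ| + 1) := by linarith [hB p hp]
  rwa [hlow, div_le_iff₀ hC, zero_mul] at hle

lemma bddBelow_ratio_image (hAB : ∀ p ∈ P, |A p| ≤ M * B p) :
    BddBelow ((fun p => A p / B p) '' {p ∈ P | 0 < B p}) :=
  ⟨-M, forall_mem_image.2 fun p ⟨hp, hBp⟩ => by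
    rw [le_div_iff₀ hBp]
    linarith [neg_abs_le (A p), hAB p hp]⟩

lemma lowerEnvelope_nonneg_of_le_infRatio (hB : ∀ p ∈ P, 0 ≤ B p)
    (hAB : ∀ p ∈ P, |A p| ≤ M * B p) (hPne : P.Nonempty) (hμ : μ ≤ infRatio P A B) :
    0 ≤ lowerEnvelope P A B μ := by
  refine le_csInf (hPne.image _) (forall_mem_image.2 fun p hp => ?_)
  rcases (hB p hp).lt_or_eq with hBp | hBp
  · have : μ ≤ A p / B p := hμ.trans (csInf_le (bddBelow_ratio_image hAB) ⟨p, ⟨hp, hBp⟩, rfl⟩)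
    rw [le_div_iff₀ hBp] at this
    linarith
  · have := hAB p hp
    rw [← hBp, mul_zero, abs_nonpos_iff] at this
    simp [this, ← hBp]

lemma lowerEnvelope_neg_of_infRatio_lt (hbdd : BddBelow ((fun p => A p - μ * B p) '' P))
    (hne : {p ∈ P | 0 < B p}.Nonempty) (hμ : infRatio P A B < μ) :
    lowerEnvelope P A B μ < 0 := by
  obtain ⟨_, ⟨p, ⟨hp, hBp⟩, rfl⟩, hlt⟩ := exists_lt_of_csInf_lt (hne.image _) hμ
  rw [div_lt_iff₀ hBp] at hlt
  linarith [lowerEnvelope_le hbdd hp]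

lemma concaveOn_lowerEnvelope (hPne : P.Nonempty)
    (hbdd : ∀ μ, BddBelow ((fun p => A p - μ * B p) '' P)) :
    ConcaveOn ℝ univ (lowerEnvelope P A B) := by
  refine ⟨convex_univ, fun x _ y _ a b ha hb hab => le_csInf (hPne.image _) ?_⟩
  rintro _ ⟨p, hp, rfl⟩
  calc a • lowerEnvelope P A B x + b • lowerEnvelope P A B y
      ≤ a * (A p - x * B p) + b * (A p - y * B p) := by
        simp only [smul_eq_mul]
        gcongr <;> exact lowerEnvelope_le (hbdd _) hp
    _ = A p - (a • x + b • y) * B p := by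
        simp only [smul_eq_mul]
        linear_combination A p * hab

theorem exists_isGreatest_lowerEnvelope_nonneg (hB : ∀ p ∈ P, 0 ≤ B p)
    (hAB : ∀ p ∈ P, |A p| ≤ M * B p) (hlow : sInf (B '' P) = 0) (hup : 0 < sSup (B '' P)) :
    IsGreatest {μ | 0 ≤ lowerEnvelope P A B μ} (infRatio P A B) ∧
      (∀ μ ≤ infRatio P A B, lowerEnvelope P A B μ = 0) ∧
      StrictAntiOn (lowerEnvelope P A B) (Ioi (infRatio P A B)) := by
  have hBbdd := Real.bddAbove_of_sSup_pos hup
  have hPne : P.Nonempty := (Real.nonempty_of_sSup_pos hup).of_image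
  have hbdd := bddBelow_affine_image hB hAB hBbdd
  have hpos : {p ∈ P | 0 < B p}.Nonempty := by
    obtain ⟨_, ⟨p, hp, rfl⟩, hBp⟩ := exists_lt_of_lt_csSup (hPne.image B) hup
    exact ⟨p, hp, hBp⟩
  have hneg : ∀ μ, infRatio P A B < μ → lowerEnvelope P A B μ < 0 :=
    fun μ => lowerEnvelope_neg_of_infRatio_lt (hbdd μ) hpos
  have hzero : ∀ μ ≤ infRatio P A B, lowerEnvelope P A B μ = 0 := fun μ hμ =>
    (lowerEnvelope_nonpos hB hAB hBbdd hPne hlow μ).antisymm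
      (lowerEnvelope_nonneg_of_le_infRatio hB hAB hPne hμ)
  refine ⟨⟨(hzero _ le_rfl).ge, fun μ hμ => not_lt.1 fun h => (hneg μ h).not_ge hμ⟩, hzero, ?_⟩
  refine (concaveOn_lowerEnvelope hPne hbdd).strictAntiOn_Ioi fun μ hμ => ?_
  rw [hzero _ le_rfl]
  exact hneg μ hμ

end LowerEnvelope

lemma GBR_eq_lowerEnvelope {S T : Type*} [Fintype S] [Fintype T]
    (P : Set (S × T → ℝ)) (g : S → ℝ) (f : T → ℝ) :
    GBR P g f = lowerEnvelope P (fun p => ∑ x : S × T, p x * g x.1 * f x.2)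
      (fun p => ∑ x : S × T, p x * g x.1) := by
  funext μ
  unfold GBR lowerEnvelope
  congr! with p
  rw [mul_sum, ← sum_sub_distrib]
  exact sum_congr rfl fun x _ => by ring

theorem GBR_max_root_general {S T : Type*} [Fintype S] [Fintype T]
    (P : Set (S × T → ℝ)) (hP : ∀ p ∈ P, IsPMF p)
    (g : S → ℝ) (hg : ∀ s, 0 ≤ g s) (f : T → ℝ)
    (hlow : sInf ((fun p => ∑ x : S × T, p x * g x.1) '' P) = 0)
    (hup : 0 < sSup ((fun p => ∑ x : S × T, p x * g x.1) '' P)) :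
    ∃ μs : ℝ, IsGreatest {μ : ℝ | 0 ≤ GBR P g f μ} μs ∧
      (∀ μ ≤ μs, GBR P g f μ = 0) ∧
      StrictAntiOn (GBR P g f) (Set.Ioi μs) := by
  have hweight : ∀ p ∈ P, ∀ x : S × T, 0 ≤ p x * g x.1 :=
    fun p hp x => mul_nonneg ((hP p hp).1 x) (hg x.1)
  rw [GBR_eq_lowerEnvelope]
  exact ⟨_, exists_isGreatest_lowerEnvelope_nonneg
    (fun p hp => sum_nonneg fun x _ => hweight p hp x)
    (fun p hp => abs_sum_mul_le_mul_sum univ (fun x _ => hweight p hp x)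
      fun x _ => (Real.norm_eq_abs _).symm.trans_le (norm_le_pi_norm f x.2))
    hlow hup⟩

/-- If the lower expectation of `g` is zero but its upper expectation is positive, then `G`
has a maximum root `μ*`, equals zero for all `μ ≤ μ*`, and is strictly decreasing on `(μ*, ∞)`. -/
theorem GBR_max_root {S T : Type*} [Fintype S] [Fintype T]
    (P : Set (S × T → ℝ)) (hPne : P.Nonempty) (hP : ∀ p ∈ P, IsPMF p)
    (g : S → ℝ) (hg : ∀ s, 0 ≤ g s) (f : T → ℝ)
    (hlow : sInf ((fun p => ∑ x : S × T, p x * g x.1) '' P) = 0)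
    (hup : 0 < sSup ((fun p => ∑ x : S × T, p x * g x.1) '' P)) :
    ∃ μs : ℝ, IsGreatest {μ : ℝ | 0 ≤ GBR P g f μ} μs ∧
      (∀ μ ≤ μs, GBR P g f μ = 0) ∧
      StrictAntiOn (GBR P g f) (Set.Ioi μs) :=
  GBR_max_root_general P hP g hg f hlow hup
end

section
/- Generalised Bayes' rule: Let S, T be finite sets, P a nonempty set of probability mass functions on S × T, g : S → ℝ nonnegative, f : T → ℝ. If sup_{p ∈ P} E_p[g] > 0, then max { μ ∈ ℝ : inf_{p ∈ P} E_p[g(s)(f(t) − μ)] ≥ 0 } = inf { E_p[g(s)f(t)] / E_p[g(s)] : p ∈ P, E_p[g(s)] > 0 }, and in particular the maximum on the left-hand side exists. -/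
/-- A PMF-weighted sum is at least the minimum of the weighted function. -/
lemma sum_pmf_ge {α : Type*} [Fintype α] (hne : (Finset.univ : Finset α).Nonempty)
    (p c : α → ℝ) (h0 : ∀ x, 0 ≤ p x) (h1 : ∑ x, p x = 1) :
    Finset.univ.inf' hne c ≤ ∑ x, p x * c x := by
  calc Finset.univ.inf' hne c = ∑ x, p x * Finset.univ.inf' hne c := by
        rw [← Finset.sum_mul, h1, one_mul]
    _ ≤ ∑ x, p x * c x :=
        Finset.sum_le_sum fun x _ =>
          mul_le_mul_of_nonneg_left (Finset.inf'_le _ (Finset.mem_univ x)) (h0 x)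

/-- Generalised Bayes' rule: if the upper expectation of `g` is positive, then
`max {μ : G(μ) ≥ 0}` exists and equals
`inf { E_p[g f] / E_p[g] : p ∈ P, E_p[g] > 0 }`. -/
theorem GBR_generalised_bayes {S T : Type*} [Fintype S] [Fintype T]
    (P : Set (S × T → ℝ)) (hPne : P.Nonempty) (hP : ∀ p ∈ P, IsPMF p)
    (g : S → ℝ) (hg : ∀ s, 0 ≤ g s) (f : T → ℝ)
    (hup : 0 < sSup ((fun p => ∑ x : S × T, p x * g x.1) '' P)) :
    IsGreatest {μ : ℝ | 0 ≤ GBR P g f μ}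
      (sInf {r : ℝ | ∃ p ∈ P, 0 < ∑ x : S × T, p x * g x.1 ∧
        r = (∑ x : S × T, p x * (g x.1 * f x.2)) / (∑ x : S × T, p x * g x.1)}) := by
  obtain ⟨p₀, hp₀⟩ := hPne
  -- the index type is nonempty
  have hne : (Finset.univ : Finset (S × T)).Nonempty := by
    rcases (Finset.univ : Finset (S × T)).eq_empty_or_nonempty with h | h
    · exfalso
      have := (hP p₀ hp₀).2
      rw [h, Finset.sum_empty] at this
      norm_num at this
    · exact h
  have hTne : (Finset.univ : Finset T).Nonempty := ⟨hne.choose.2, Finset.mem_univ _⟩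
  set A : (S × T → ℝ) → ℝ := fun p => ∑ x : S × T, p x * g x.1 with hAdef
  set B : (S × T → ℝ) → ℝ := fun p => ∑ x : S × T, p x * (g x.1 * f x.2) with hBdef
  set R : Set ℝ := {r : ℝ | ∃ p ∈ P, 0 < A p ∧ r = B p / A p} with hRdef
  -- rewrite GBR in terms of A and B
  have hident : ∀ (μ : ℝ) (p : S × T → ℝ),
      ∑ x : S × T, p x * (g x.1 * (f x.2 - μ)) = B p - μ * A p := by
    intro μ p
    simp only [hAdef, hBdef, Finset.mul_sum, ← Finset.sum_sub_distrib]
    exact Finset.sum_congr rfl fun x _ => by ring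
  have hGBR : ∀ μ : ℝ, GBR P g f μ = sInf ((fun p => B p - μ * A p) '' P) := by
    intro μ
    unfold GBR
    congr 1
    exact Set.image_congr fun p _ => hident μ p
  have hA0 : ∀ p ∈ P, 0 ≤ A p := fun p hp =>
    Finset.sum_nonneg fun x _ => mul_nonneg ((hP p hp).1 x) (hg x.1)
  have hAB0 : ∀ p ∈ P, A p = 0 → B p = 0 := by
    intro p hp h0
    have h := (Finset.sum_eq_zero_iff_of_nonneg
      (fun x _ => mul_nonneg ((hP p hp).1 x) (hg x.1))).1 h0
    refine Finset.sum_eq_zero fun x _ => ?_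
    rw [← mul_assoc, h x (Finset.mem_univ x), zero_mul]
  -- R is nonempty
  have hRne : R.Nonempty := by
    by_contra h
    have hle : ∀ p ∈ P, A p ≤ 0 := by
      intro p hp
      by_contra hlt
      exact h ⟨B p / A p, p, hp, lt_of_not_ge hlt, rfl⟩
    have : sSup ((fun p => ∑ x : S × T, p x * g x.1) '' P) ≤ 0 :=
      Real.sSup_le (by rintro x ⟨p, hp, rfl⟩; exact hle p hp) le_rfl
    linarith
  -- R is bounded below
  set Lf : ℝ := Finset.univ.inf' hTne f with hLf
  have hRbdd : BddBelow R := by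
    refine ⟨Lf, ?_⟩
    rintro r ⟨p, hp, hpos, rfl⟩
    rw [le_div_iff₀ hpos]
    calc Lf * A p = ∑ x : S × T, p x * (g x.1 * Lf) := by
          rw [hAdef]
          rw [Finset.mul_sum]
          exact Finset.sum_congr rfl fun x _ => by ring
      _ ≤ B p :=
          Finset.sum_le_sum fun x _ =>
            mul_le_mul_of_nonneg_left
              (mul_le_mul_of_nonneg_left (Finset.inf'_le _ (Finset.mem_univ x.2)) (hg x.1))
              ((hP p hp).1 x)
  constructor
  · -- membership: 0 ≤ GBR P g f (sInf R)
    show (0 : ℝ) ≤ GBR P g f (sInf R)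
    rw [hGBR]
    refine le_csInf (Set.Nonempty.image _ ⟨p₀, hp₀⟩) ?_
    rintro b ⟨p, hp, rfl⟩
    show 0 ≤ B p - sInf R * A p
    rcases (hA0 p hp).lt_or_eq with hpos | heq
    · have hmem : B p / A p ∈ R := ⟨p, hp, hpos, rfl⟩
      have hle : sInf R ≤ B p / A p := csInf_le hRbdd hmem
      have := (le_div_iff₀ hpos).1 hle
      linarith
    · rw [hAB0 p hp heq.symm, ← heq]
      ring_nf
      simp
  · -- upper bound
    intro μ hμ
    have hμ' : 0 ≤ sInf ((fun p => B p - μ * A p) '' P) := by rw [← hGBR]; exact hμ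
    refine le_csInf hRne ?_
    rintro r ⟨p, hp, hpos, rfl⟩
    have hbdd : BddBelow ((fun p => B p - μ * A p) '' P) := by
      refine ⟨Finset.univ.inf' hne (fun x => g x.1 * (f x.2 - μ)), ?_⟩
      rintro b ⟨q, hq, rfl⟩
      show _ ≤ B q - μ * A q
      rw [← hident μ q]
      exact sum_pmf_ge hne q _ (hP q hq).1 (hP q hq).2
    have hle : sInf ((fun p => B p - μ * A p) '' P) ≤ B p - μ * A p :=
      csInf_le hbdd ⟨p, hp, rfl⟩
    have h0 : 0 ≤ B p - μ * A p := le_trans hμ' hle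
    rw [le_div_iff₀ hpos]
    linarith
end

section
/- Limit of maximizing roots equals root of the limit: Let S, T be finite sets, P a nonempty set of probability mass functions on S × T, f : T → ℝ, and let (g_i)_{i∈ℕ} be a sequence of nonnegative functions S → ℝ converging pointwise (equivalently uniformly, since S is finite) to a nonnegative function g with inf_{p∈P} E_p[g] > 0. Suppose for each i, μ_i ∈ [min f, max f] satisfies inf_{p∈P} E_p[g_i(s)(f(t) − μ_i)] = 0. Then μ_i converges to the unique root μ* of μ ↦ inf_{p∈P} E_p[g(s)(f(t) − μ)]. -/
open Filter

/-- Limit of maximizing roots equals the root of the limit: if nonnegative `g i` converge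
pointwise to `g` whose lower expectation is positive, and each `μ i ∈ [min f, max f]` is a root
of the `G` associated to `g i`, then `μ i` converges to the unique root `μ*` of the `G`
associated to `g`. -/
theorem roots_tendsto_root_of_limit
    {S T : Type*} [Fintype S] [Fintype T] [Nonempty T]
    (P : Set (S × T → ℝ)) (hPne : P.Nonempty) (hP : ∀ p ∈ P, IsPMF p)
    (f : T → ℝ)
    (gs : ℕ → S → ℝ) (hgs : ∀ i s, 0 ≤ gs i s)
    (g : S → ℝ) (hg : ∀ s, 0 ≤ g s)
    (hconv : ∀ s, Tendsto (fun i => gs i s) atTop (nhds (g s)))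
    (hpos : 0 < sInf ((fun p => ∑ x : S × T, p x * g x.1) '' P))
    (μseq : ℕ → ℝ)
    (hmem : ∀ i, μseq i ∈
      Set.Icc (Finset.univ.inf' Finset.univ_nonempty f)
        (Finset.univ.sup' Finset.univ_nonempty f))
    (hroots : ∀ i, GBR P (gs i) f (μseq i) = 0)
    (μstar : ℝ) (hstar : GBR P g f μstar = 0) :
    Tendsto μseq atTop (nhds μstar) := by
  classical
  -- S is nonempty
  have hSne : Nonempty S := by
    by_contra h
    rw [not_nonempty_iff] at h
    obtain ⟨p0, hp0⟩ := hPne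
    have h1 := (hP p0 hp0).2
    simp at h1
  have hSTne : Nonempty (S × T) := ⟨⟨Classical.arbitrary S, Classical.arbitrary T⟩⟩
  have hne : (Finset.univ : Finset (S × T)).Nonempty := Finset.univ_nonempty
  set mf := Finset.univ.inf' (Finset.univ_nonempty (α := T)) f with hmf
  set Mf := Finset.univ.sup' (Finset.univ_nonempty (α := T)) f with hMf
  set D := Mf - mf with hDdef
  have hD : 0 ≤ D := by
    have h1 : mf ≤ f (Classical.arbitrary T) := Finset.inf'_le _ (Finset.mem_univ _)
    have h2 : f (Classical.arbitrary T) ≤ Mf := Finset.le_sup' _ (Finset.mem_univ _)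
    simp only [hDdef]; linarith
  set c := sInf ((fun p => ∑ x : S × T, p x * g x.1) '' P) with hcdef
  have hc : 0 < c := hpos
  -- basic facts about the infima
  have bdd : ∀ h : S × T → ℝ, BddBelow ((fun p => ∑ x : S × T, p x * h x) '' P) := by
    intro h
    refine ⟨Finset.univ.inf' hne h, ?_⟩
    rintro y ⟨p, hp, rfl⟩
    obtain ⟨hp0, hp1⟩ := hP p hp
    calc Finset.univ.inf' hne h = ∑ x : S × T, p x * Finset.univ.inf' hne h := by
          rw [← Finset.sum_mul, hp1, one_mul]
      _ ≤ ∑ x : S × T, p x * h x := by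
          refine Finset.sum_le_sum fun x _ => ?_
          exact mul_le_mul_of_nonneg_left (Finset.inf'_le _ (Finset.mem_univ x)) (hp0 x)
  have inf_le : ∀ (h : S × T → ℝ) (p : S × T → ℝ), p ∈ P →
      sInf ((fun p => ∑ x : S × T, p x * h x) '' P) ≤ ∑ x : S × T, p x * h x :=
    fun h p hp => csInf_le (bdd h) ⟨p, hp, rfl⟩
  have le_inf : ∀ (h : S × T → ℝ) (b : ℝ), (∀ p ∈ P, b ≤ ∑ x : S × T, p x * h x) →
      b ≤ sInf ((fun p => ∑ x : S × T, p x * h x) '' P) := by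
    intro h b hb
    refine le_csInf (hPne.image _) ?_
    rintro y ⟨p, hp, rfl⟩
    exact hb p hp
  -- quantitative monotonicity of GBR
  have mono : ∀ μ μ' : ℝ, μ ≤ μ' → GBR P g f μ' + (μ' - μ) * c ≤ GBR P g f μ := by
    intro μ μ' hle
    refine le_inf _ _ fun p hp => ?_
    have key : ∑ x : S × T, p x * (g x.1 * (f x.2 - μ))
        = ∑ x : S × T, p x * (g x.1 * (f x.2 - μ')) + (μ' - μ) * ∑ x : S × T, p x * g x.1 := by
      rw [Finset.mul_sum, ← Finset.sum_add_distrib]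
      exact Finset.sum_congr rfl fun x _ => by ring
    rw [key]
    have h1 : GBR P g f μ' ≤ ∑ x : S × T, p x * (g x.1 * (f x.2 - μ')) := inf_le _ p hp
    have h2 : c ≤ ∑ x : S × T, p x * g x.1 := inf_le (fun x => g x.1) p hp
    have h3 : (μ' - μ) * c ≤ (μ' - μ) * ∑ x : S × T, p x * g x.1 :=
      mul_le_mul_of_nonneg_left h2 (by linarith)
    linarith
  -- comparison of GBR for two nearby weight functions
  have comp : ∀ (g1 g2 : S → ℝ) (μ η : ℝ), 0 ≤ η → mf ≤ μ → μ ≤ Mf →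
      (∀ s, |g1 s - g2 s| ≤ η) →
      GBR P g1 f μ ≤ GBR P g2 f μ + η * D := by
    intro g1 g2 μ η hη hμ1 hμ2 hcl
    rw [GBR, GBR, ← sub_le_iff_le_add]
    refine le_inf _ _ fun p hp => ?_
    have h1 : sInf ((fun p => ∑ x : S × T, p x * (g1 x.1 * (f x.2 - μ))) '' P)
        ≤ ∑ x : S × T, p x * (g1 x.1 * (f x.2 - μ)) := inf_le _ p hp
    obtain ⟨hp0, hp1⟩ := hP p hp
    have hbound : ∀ x : S × T,
        p x * (g1 x.1 * (f x.2 - μ)) - p x * (g2 x.1 * (f x.2 - μ)) ≤ p x * (η * D) := by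
      intro x
      have e1 : p x * (g1 x.1 * (f x.2 - μ)) - p x * (g2 x.1 * (f x.2 - μ))
          = p x * ((g1 x.1 - g2 x.1) * (f x.2 - μ)) := by ring
      rw [e1]
      refine mul_le_mul_of_nonneg_left ?_ (hp0 x)
      calc (g1 x.1 - g2 x.1) * (f x.2 - μ) ≤ |(g1 x.1 - g2 x.1) * (f x.2 - μ)| := le_abs_self _
        _ = |g1 x.1 - g2 x.1| * |f x.2 - μ| := abs_mul _ _
        _ ≤ η * D := by
            refine mul_le_mul (hcl x.1) ?_ (abs_nonneg _) hη
            have hf1 : mf ≤ f x.2 := Finset.inf'_le _ (Finset.mem_univ x.2)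
            have hf2 : f x.2 ≤ Mf := Finset.le_sup' _ (Finset.mem_univ x.2)
            rw [abs_sub_le_iff]
            constructor <;> [skip; skip] <;> simp only [hDdef] <;> linarith
    have hsum : ∑ x : S × T, p x * (g1 x.1 * (f x.2 - μ))
        - ∑ x : S × T, p x * (g2 x.1 * (f x.2 - μ)) ≤ η * D := by
      rw [← Finset.sum_sub_distrib]
      calc ∑ x : S × T, (p x * (g1 x.1 * (f x.2 - μ)) - p x * (g2 x.1 * (f x.2 - μ)))
          ≤ ∑ x : S × T, p x * (η * D) := Finset.sum_le_sum fun x _ => hbound x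
        _ = η * D := by rw [← Finset.sum_mul, hp1, one_mul]
    linarith
  -- main argument
  rw [Metric.tendsto_atTop]
  intro ε hε
  set η := c * ε / (2 * (D + 1)) with hηdef
  have hD1 : (0:ℝ) < D + 1 := by linarith
  have hη : 0 < η := by positivity
  have hηD : η * D < ε * c := by
    rw [hηdef, div_mul_eq_mul_div, div_lt_iff₀ (by positivity)]
    nlinarith [mul_pos hc hε, mul_pos (mul_pos hc hε) hD1]
  have hev : ∀ᶠ i in atTop, ∀ s, |gs i s - g s| ≤ η := by
    rw [eventually_all]
    intro s
    have := Metric.tendsto_atTop.mp (hconv s) η hη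
    obtain ⟨N, hN⟩ := this
    refine eventually_atTop.mpr ⟨N, fun n hn => ?_⟩
    have := hN n hn
    rw [Real.dist_eq] at this
    linarith
  obtain ⟨N, hN⟩ := eventually_atTop.mp hev
  refine ⟨N, fun n hn => ?_⟩
  have hclose := hN n hn
  obtain ⟨hμ1, hμ2⟩ := hmem n
  -- |GBR P g f (μseq n)| ≤ η * D
  have hub : GBR P g f (μseq n) ≤ η * D := by
    have := comp g (gs n) (μseq n) η (le_of_lt hη) hμ1 hμ2
      (fun s => by rw [abs_sub_comm]; exact hclose s)
    rw [hroots n] at this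
    linarith
  have hlb : -(η * D) ≤ GBR P g f (μseq n) := by
    have := comp (gs n) g (μseq n) η (le_of_lt hη) hμ1 hμ2 hclose
    rw [hroots n] at this
    linarith
  rw [Real.dist_eq, abs_sub_lt_iff]
  rcases le_total μstar (μseq n) with hc1 | hc1
  · have hm := mono μstar (μseq n) hc1
    rw [hstar] at hm
    -- GBR (μseq n) + (μseq n - μstar) * c ≤ 0
    have : (μseq n - μstar) * c ≤ η * D := by linarith
    constructor
    · nlinarith
    · linarith [mul_pos hε hc, mul_nonneg (le_of_lt hη) hD]
  · have hm := mono (μseq n) μstar hc1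
    rw [hstar] at hm
    have : (μstar - μseq n) * c ≤ η * D := by linarith
    constructor
    · linarith [mul_pos hε hc, mul_nonneg (le_of_lt hη) hD]
    · nlinarith
end
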